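/- Let n ≥ 3 and let φ, f, ν, λ : ℝ → ℝ be smooth functions such that φ(r) ≠ 0 and f'(r) ≠ 0 for all r ≥ 0. Define Φ, F, N, Λ : ℝⁿ → ℝ by Φ(x) = φ(‖x‖²), F(x) = f(‖x‖²), N(x) = ν(‖x‖²), Λ(x) = λ(‖x‖²). Then the system of equations: (i) for all x ∈ ℝⁿ and all indices i ≠ j, (n−2)·∂ᵢ∂ⱼΦ(x)/Φ(x) + ∂ᵢ∂ⱼF(x) + ∂ᵢF(x)·∂ⱼΦ(x)/Φ(x) + ∂ᵢΦ(x)·∂ⱼF(x)/Φ(x) − N(x)·∂ᵢF(x)·∂ⱼF(x) = 0, and (ii) for all x ∈ ℝⁿ and every index i, (n−2)·∂ᵢ∂ᵢΦ(x)/Φ(x) + ∂ᵢ∂ᵢF(x) + 2∂ᵢF(x)·∂ᵢΦ(x)/Φ(x) − N(x)·(∂ᵢF(x))² + Σ_{k=1}^n [∂ₖ∂ₖΦ(x)/Φ(x) − (n−1)(∂ₖΦ(x)/Φ(x))² − ∂ₖF(x)·∂ₖΦ(x)/Φ(x)] = Λ(x)/Φ(x)², holds if and only if for all r ≥ 0: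 ν(r) = (1/f'(r)²)·[(n−2)·φ''(r)/φ(r) + f''(r) + 2f'(r)·φ'(r)/φ(r)] and λ(r) = 4·[(n−1)·φ'(r)·(φ(r) − r·φ'(r)) + r·φ(r)·(φ''(r) − f'(r)·φ'(r))] + 2f'(r)·φ(r)². -/

import Mathlib

/-- The partial derivative of `F` in the `i`-th coordinate direction. -/
noncomputable def pd {n : ℕ} (F : EuclideanSpace ℝ (Fin n) → ℝ) (i : Fin n)
    (x : EuclideanSpace ℝ (Fin n)) : ℝ :=
  fderiv ℝ F x (EuclideanSpace.single i 1)

/-- The second partial derivative `∂ᵢ∂ⱼF`. -/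
noncomputable def pd2 {n : ℕ} (F : EuclideanSpace ℝ (Fin n) → ℝ) (i j : Fin n)
    (x : EuclideanSpace ℝ (Fin n)) : ℝ :=
  pd (fun y => pd F j y) i x

lemma normsq {n : ℕ} (x : EuclideanSpace ℝ (Fin n)) : ‖x‖ ^ 2 = ∑ k, x k * x k := by
  rw [EuclideanSpace.norm_eq, Real.sq_sqrt (by positivity)]
  simp [sq_abs, sq]

lemma hasU {n : ℕ} (x : EuclideanSpace ℝ (Fin n)) :
    HasFDerivAt (fun y : EuclideanSpace ℝ (Fin n) => ‖y‖ ^ 2)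
      (∑ k, (2 * x k) • (EuclideanSpace.proj k : EuclideanSpace ℝ (Fin n) →L[ℝ] ℝ)) x := by
  have h : (fun y : EuclideanSpace ℝ (Fin n) => ‖y‖ ^ 2) = fun y => ∑ k, y k * y k :=
    funext fun y => normsq y
  rw [h]
  have hk : ∀ k : Fin n, HasFDerivAt (fun y : EuclideanSpace ℝ (Fin n) => y k * y k)
      ((x k) • (EuclideanSpace.proj k : EuclideanSpace ℝ (Fin n) →L[ℝ] ℝ)
        + (x k) • (EuclideanSpace.proj k : EuclideanSpace ℝ (Fin n) →L[ℝ] ℝ)) x := fun k => by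
    have hp : HasFDerivAt (fun y : EuclideanSpace ℝ (Fin n) => y k)
        (EuclideanSpace.proj k : EuclideanSpace ℝ (Fin n) →L[ℝ] ℝ) x :=
      (EuclideanSpace.proj (𝕜 := ℝ) k).hasFDerivAt
    exact hp.mul hp
  have h2 := HasFDerivAt.fun_sum (fun k (_ : k ∈ Finset.univ) => hk k)
  refine h2.congr_fderiv ?_
  apply Finset.sum_congr rfl
  intro k _
  rw [two_mul, add_smul]

lemma evalU {n : ℕ} (x : EuclideanSpace ℝ (Fin n)) (i : Fin n) :
    (∑ k, (2 * x k) • (EuclideanSpace.proj k : EuclideanSpace ℝ (Fin n) →L[ℝ] ℝ))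
      (EuclideanSpace.single i 1) = 2 * x i := by
  simp [ContinuousLinearMap.sum_apply, EuclideanSpace.single_apply]

lemma pd_comp {n : ℕ} (g : ℝ → ℝ) (hg : ContDiff ℝ (⊤ : ℕ∞) g) (i : Fin n)
    (x : EuclideanSpace ℝ (Fin n)) :
    pd (fun y => g (‖y‖ ^ 2)) i x = deriv g (‖x‖ ^ 2) * (2 * x i) := by
  have hd : HasDerivAt g (deriv g (‖x‖ ^ 2)) (‖x‖ ^ 2) :=
    ((hg.differentiable (by norm_num)) (‖x‖ ^ 2)).hasDerivAt
  have hc : HasFDerivAt (fun y : EuclideanSpace ℝ (Fin n) => g (‖y‖ ^ 2))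
      (deriv g (‖x‖ ^ 2) • ∑ k, (2 * x k) • (EuclideanSpace.proj k : EuclideanSpace ℝ (Fin n) →L[ℝ] ℝ)) x :=
    hd.comp_hasFDerivAt x (hasU x)
  rw [pd, hc.fderiv]
  simp [evalU]

lemma pd2_comp {n : ℕ} (g : ℝ → ℝ) (hg : ContDiff ℝ (⊤ : ℕ∞) g) (i j : Fin n)
    (x : EuclideanSpace ℝ (Fin n)) :
    pd2 (fun y => g (‖y‖ ^ 2)) i j x
      = deriv (deriv g) (‖x‖ ^ 2) * (2 * x i) * (2 * x j)
        + deriv g (‖x‖ ^ 2) * (if j = i then 2 else 0) := by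
  have hg' : ContDiff ℝ (⊤ : ℕ∞) (deriv g) := (contDiff_infty_iff_deriv.mp hg).2
  rw [pd2]
  have hrw : (fun y => pd (fun z : EuclideanSpace ℝ (Fin n) => g (‖z‖ ^ 2)) j y)
      = fun y : EuclideanSpace ℝ (Fin n) => deriv g (‖y‖ ^ 2) * (2 * y j) :=
    funext fun y => pd_comp g hg j y
  rw [hrw]
  have hd : HasDerivAt (deriv g) (deriv (deriv g) (‖x‖ ^ 2)) (‖x‖ ^ 2) :=
    ((hg'.differentiable (by norm_num)) (‖x‖ ^ 2)).hasDerivAt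
  have h1 : HasFDerivAt (fun y : EuclideanSpace ℝ (Fin n) => deriv g (‖y‖ ^ 2))
      (deriv (deriv g) (‖x‖ ^ 2) • ∑ k, (2 * x k) • (EuclideanSpace.proj k : EuclideanSpace ℝ (Fin n) →L[ℝ] ℝ)) x :=
    by have := hd.comp_hasFDerivAt x (hasU x); exact this
  have hp : HasFDerivAt (fun y : EuclideanSpace ℝ (Fin n) => y j)
      (EuclideanSpace.proj j : EuclideanSpace ℝ (Fin n) →L[ℝ] ℝ) x :=
    (EuclideanSpace.proj (𝕜 := ℝ) j).hasFDerivAt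
  have h2 : HasFDerivAt (fun y : EuclideanSpace ℝ (Fin n) => 2 * y j)
      ((2 : ℝ) • (EuclideanSpace.proj j : EuclideanSpace ℝ (Fin n) →L[ℝ] ℝ)) x := hp.const_mul 2
  have hm : HasFDerivAt (fun y : EuclideanSpace ℝ (Fin n) => deriv g (‖y‖ ^ 2) * (2 * y j)) _ x :=
    h1.mul h2
  rw [pd, hm.fderiv]
  simp [ContinuousLinearMap.add_apply, ContinuousLinearMap.smul_apply, evalU,
    EuclideanSpace.single_apply]
  by_cases hji : j = i <;> simp [hji] <;> ring

lemma sum_quad {n : ℕ} (x : EuclideanSpace ℝ (Fin n)) (C D : ℝ) :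
    ∑ k : Fin n, (C * (x k * x k) + D) = C * ‖x‖ ^ 2 + n * D := by
  rw [Finset.sum_add_distrib, ← Finset.mul_sum, ← normsq, Finset.sum_const, Finset.card_univ,
    Fintype.card_fin, nsmul_eq_mul]

/-- The radial function controlling the off-diagonal equations. -/
noncomputable def Af (n : ℕ) (φ f ν : ℝ → ℝ) (r : ℝ) : ℝ :=
  ((n : ℝ) - 2) * deriv (deriv φ) r / φ r + deriv (deriv f) r
    + 2 * deriv f r * deriv φ r / φ r - ν r * (deriv f r) ^ 2

/-- The radial function controlling the diagonal equations. -/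
noncomputable def Bf (n : ℕ) (φ f : ℝ → ℝ) (r : ℝ) : ℝ :=
  2 * ((n : ℝ) - 2) * deriv φ r / φ r + 2 * deriv f r
    + (4 * deriv (deriv φ) r / φ r - 4 * ((n : ℝ) - 1) * (deriv φ r) ^ 2 / (φ r) ^ 2
        - 4 * deriv f r * deriv φ r / φ r) * r
    + (n : ℝ) * (2 * deriv φ r / φ r)

lemma sum_part {n : ℕ} (φ f : ℝ → ℝ) (hφd : ContDiff ℝ (⊤ : ℕ∞) φ)
    (hfd : ContDiff ℝ (⊤ : ℕ∞) f) (x : EuclideanSpace ℝ (Fin n)) :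
    (∑ k : Fin n, (pd2 (fun y => φ (‖y‖ ^ 2)) k k x / φ (‖x‖ ^ 2)
        - ((n : ℝ) - 1) * (pd (fun y => φ (‖y‖ ^ 2)) k x / φ (‖x‖ ^ 2)) ^ 2
        - pd (fun y => f (‖y‖ ^ 2)) k x * pd (fun y => φ (‖y‖ ^ 2)) k x / φ (‖x‖ ^ 2)))
      = (4 * deriv (deriv φ) (‖x‖ ^ 2) / φ (‖x‖ ^ 2)
          - 4 * ((n : ℝ) - 1) * (deriv φ (‖x‖ ^ 2)) ^ 2 / (φ (‖x‖ ^ 2)) ^ 2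
          - 4 * deriv f (‖x‖ ^ 2) * deriv φ (‖x‖ ^ 2) / φ (‖x‖ ^ 2)) * ‖x‖ ^ 2
        + n * (2 * deriv φ (‖x‖ ^ 2) / φ (‖x‖ ^ 2)) := by
  rw [← sum_quad]
  apply Finset.sum_congr rfl
  intro k _
  rw [pd2_comp φ hφd, pd_comp φ hφd, pd_comp f hfd, if_pos rfl]
  ring

theorem stmt_0 (n : ℕ) (hn : 3 ≤ n)
    (φ f ν lam : ℝ → ℝ)
    (hφ : ContDiff ℝ (⊤ : ℕ∞) φ) (hf : ContDiff ℝ (⊤ : ℕ∞) f)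
    (hν : ContDiff ℝ (⊤ : ℕ∞) ν) (hlam : ContDiff ℝ (⊤ : ℕ∞) lam)
    (hφ0 : ∀ r : ℝ, 0 ≤ r → φ r ≠ 0)
    (hf' : ∀ r : ℝ, 0 ≤ r → deriv f r ≠ 0)
    (Φ F N Λ : EuclideanSpace ℝ (Fin n) → ℝ)
    (hΦ : ∀ x, Φ x = φ (‖x‖ ^ 2))
    (hF : ∀ x, F x = f (‖x‖ ^ 2))
    (hN : ∀ x, N x = ν (‖x‖ ^ 2))
    (hΛ : ∀ x, Λ x = lam (‖x‖ ^ 2)) :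
    ((∀ x : EuclideanSpace ℝ (Fin n), ∀ i j : Fin n, i ≠ j →
        ((n : ℝ) - 2) * pd2 Φ i j x / Φ x + pd2 F i j x
          + pd F i x * pd Φ j x / Φ x + pd Φ i x * pd F j x / Φ x
          - N x * pd F i x * pd F j x = 0) ∧
      (∀ x : EuclideanSpace ℝ (Fin n), ∀ i : Fin n,
        ((n : ℝ) - 2) * pd2 Φ i i x / Φ x + pd2 F i i x
          + 2 * pd F i x * pd Φ i x / Φ x - N x * (pd F i x) ^ 2
          + ∑ k : Fin n, (pd2 Φ k k x / Φ x
              - ((n : ℝ) - 1) * (pd Φ k x / Φ x) ^ 2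
              - pd F k x * pd Φ k x / Φ x)
          = Λ x / (Φ x) ^ 2))
    ↔ (∀ r : ℝ, 0 ≤ r →
        ν r = 1 / (deriv f r) ^ 2 *
            (((n : ℝ) - 2) * deriv (deriv φ) r / φ r + deriv (deriv f) r
              + 2 * deriv f r * deriv φ r / φ r) ∧
        lam r = 4 * (((n : ℝ) - 1) * deriv φ r * (φ r - r * deriv φ r)
              + r * φ r * (deriv (deriv φ) r - deriv f r * deriv φ r))
            + 2 * deriv f r * (φ r) ^ 2) := by
  have hΦ' := funext hΦ; subst hΦ'
  have hF' := funext hF; subst hF'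
  have hN' := funext hN; subst hN'
  have hΛ' := funext hΛ; subst hΛ'
  have hφd : ContDiff ℝ (⊤ : ℕ∞) φ := hφ.of_le (by simp)
  have hfd : ContDiff ℝ (⊤ : ℕ∞) f := hf.of_le (by simp)
  have hφd1 : ContDiff ℝ (⊤ : ℕ∞) (deriv φ) := (contDiff_infty_iff_deriv.mp hφd).2
  have hφd2 : ContDiff ℝ (⊤ : ℕ∞) (deriv (deriv φ)) := (contDiff_infty_iff_deriv.mp hφd1).2
  have hfd1 : ContDiff ℝ (⊤ : ℕ∞) (deriv f) := (contDiff_infty_iff_deriv.mp hfd).2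
  have hfd2 : ContDiff ℝ (⊤ : ℕ∞) (deriv (deriv f)) := (contDiff_infty_iff_deriv.mp hfd1).2
  constructor
  · rintro ⟨h1, h2⟩
    have key1 : ∀ (x : EuclideanSpace ℝ (Fin n)) (i j : Fin n), i ≠ j →
        (2 * x i) * (2 * x j) * Af n φ f ν (‖x‖ ^ 2) = 0 := by
      intro x i j hij
      have h := h1 x i j hij
      simp only [pd2_comp φ hφd, pd2_comp f hfd, pd_comp φ hφd, pd_comp f hfd,
        if_neg (show ¬ j = i from fun h' => hij h'.symm)] at h
      simp only [Af]
      linear_combination h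
    have key2 : ∀ (x : EuclideanSpace ℝ (Fin n)) (i : Fin n),
        (2 * x i) * (2 * x i) * Af n φ f ν (‖x‖ ^ 2) + Bf n φ f (‖x‖ ^ 2)
          = lam (‖x‖ ^ 2) / (φ (‖x‖ ^ 2)) ^ 2 := by
      intro x i
      have h := h2 x i
      rw [sum_part φ f hφd hfd] at h
      simp only [pd2_comp φ hφd, pd2_comp f hfd, pd_comp φ hφd, pd_comp f hfd,
        eq_self_iff_true, if_true] at h
      simp only [Af, Bf]
      linear_combination h
    have hApos : ∀ r : ℝ, 0 < r → Af n φ f ν r = 0 := by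
      intro r hr
      have hi0 : (⟨0, by omega⟩ : Fin n) ≠ ⟨1, by omega⟩ := by simp [Fin.ext_iff]
      set s := Real.sqrt (r / 2) with hs
      set x : EuclideanSpace ℝ (Fin n) :=
        (WithLp.toLp 2 (fun k => if k = (⟨0, by omega⟩ : Fin n) ∨ k = ⟨1, by omega⟩ then s else 0) :
          EuclideanSpace ℝ (Fin n)) with hxdef
      have hxk : ∀ k : Fin n,
          x k = if k = (⟨0, by omega⟩ : Fin n) ∨ k = ⟨1, by omega⟩ then s else 0 :=
        fun k => rfl
      have hspos : 0 < s := Real.sqrt_pos.mpr (by linarith)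
      have hxnorm : ‖x‖ ^ 2 = r := by
        rw [normsq]
        have h1 : ∀ k : Fin n, x k * x k =
            if k ∈ ({⟨0, by omega⟩, ⟨1, by omega⟩} : Finset (Fin n)) then s * s else 0 := by
          intro k
          by_cases hk : k = (⟨0, by omega⟩ : Fin n) ∨ k = ⟨1, by omega⟩ <;>
            simp [hxk, hk, Finset.mem_insert, Finset.mem_singleton]
        rw [Finset.sum_congr rfl fun k _ => h1 k, Finset.sum_ite_mem, Finset.univ_inter,
          Finset.sum_insert (by simp [hi0]), Finset.sum_singleton,
          Real.mul_self_sqrt (by linarith)]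
        ring
      have hk := key1 x ⟨0, by omega⟩ ⟨1, by omega⟩ hi0
      rw [hxnorm] at hk
      have hx0 : x (⟨0, by omega⟩ : Fin n) = s := by rw [hxk]; simp
      have hx1 : x (⟨1, by omega⟩ : Fin n) = s := by rw [hxk]; simp
      rw [hx0, hx1] at hk
      have hne : (2 * s) * (2 * s) ≠ 0 := by positivity
      exact (mul_eq_zero.mp hk).resolve_left hne
    have hA0 : Af n φ f ν 0 = 0 := by
      have hcont : ContinuousAt (Af n φ f ν) 0 := by
        have c1 := hφd1.continuous
        have c2 := hφd2.continuous
        have c3 := hfd1.continuous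
        have c4 := hfd2.continuous
        have cφ := hφ.continuous
        have cν := hν.continuous
        exact ((((continuousAt_const.mul c2.continuousAt).div cφ.continuousAt
            (hφ0 0 le_rfl)).add c4.continuousAt).add
          (((continuousAt_const.mul c3.continuousAt).mul c1.continuousAt).div
            cφ.continuousAt (hφ0 0 le_rfl))).sub
          (cν.continuousAt.mul (c3.continuousAt.pow 2))
      have ht1 : Filter.Tendsto (Af n φ f ν) (nhdsWithin 0 (Set.Ioi 0)) (nhds (Af n φ f ν 0)) :=
        hcont.continuousWithinAt.tendsto
      have ht2 : Filter.Tendsto (Af n φ f ν) (nhdsWithin 0 (Set.Ioi 0)) (nhds 0) := by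
        apply Filter.Tendsto.congr' _ tendsto_const_nhds
        filter_upwards [self_mem_nhdsWithin] with r hr
        exact (hApos r hr).symm
      exact tendsto_nhds_unique ht1 ht2
    have hA : ∀ r : ℝ, 0 ≤ r → Af n φ f ν r = 0 := by
      intro r hr
      rcases eq_or_lt_of_le hr with h | h
      · rw [← h]; exact hA0
      · exact hApos r h
    intro r hr
    have hAr := hA r hr
    have hφr := hφ0 r hr
    have hfr := hf' r hr
    simp only [Af] at hAr
    constructor
    · field_simp at hAr ⊢
      linear_combination -hAr
    · have hx0 : ‖(EuclideanSpace.single (⟨0, by omega⟩ : Fin n) (Real.sqrt r) :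
          EuclideanSpace ℝ (Fin n))‖ ^ 2 = r := by
        rw [EuclideanSpace.norm_single, Real.norm_eq_abs, sq_abs, Real.sq_sqrt hr]
      have h := key2 (EuclideanSpace.single ⟨0, by omega⟩ (Real.sqrt r)) ⟨0, by omega⟩
      rw [hx0, hA r hr] at h
      simp only [mul_zero, zero_add, Bf] at h
      rw [eq_div_iff (pow_ne_zero 2 hφr)] at h
      rw [← h]
      field_simp
      ring
  · intro hco
    constructor
    · intro x i j hij
      obtain ⟨hνr, -⟩ := hco (‖x‖ ^ 2) (by positivity)
      have hφr := hφ0 (‖x‖ ^ 2) (by positivity)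
      have hfr := hf' (‖x‖ ^ 2) (by positivity)
      simp only [pd2_comp φ hφd, pd2_comp f hfd, pd_comp φ hφd, pd_comp f hfd,
        if_neg (show ¬ j = i from fun h' => hij h'.symm)]
      rw [hνr]
      field_simp
      ring
    · intro x i
      obtain ⟨hνr, hlamr⟩ := hco (‖x‖ ^ 2) (by positivity)
      have hφr := hφ0 (‖x‖ ^ 2) (by positivity)
      have hfr := hf' (‖x‖ ^ 2) (by positivity)
      rw [sum_part φ f hφd hfd]
      simp only [pd2_comp φ hφd, pd2_comp f hfd, pd_comp φ hφd, pd_comp f hfd,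
        eq_self_iff_true, if_true]
      rw [hνr, hlamr]
      field_simp
      ring
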